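/- For each NFA N over an alphabet Σ in which every state has at least one outgoing transition for every symbol, there exists a DFA D obtained from N by removing transitions such that the strategy ρ_D that always follows the transitions of D is a weakly dominant strategy for the online word problem OnlineNFA(N). -/
import Mathlib


namespace CFG

/-- Juliet's two kinds of moves. -/
inductive JMove : Type
  | call : JMove
  | read : JMove
deriving DecidableEq

/-- The extended alphabet Σ̂: `Sum.inl a` is the plain symbol `a`,
`Sum.inr a` is the "called" copy `â`. -/
abbrev HSym (A : Type) : Type := A ⊕ A

/-- The homomorphism ♮ deleting called symbols. -/
def flat {A : Type} (α : List (HSym A)) : List A :=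
  α.filterMap (fun x => match x with | Sum.inl a => some a | Sum.inr _ => none)

/-- A context-free game: a (minimal) DFA `T` over `A` with finite state set `Q`,
and a replacement relation `R` with nonempty replacement words and regular
replacement languages. -/
structure CFGame (A : Type) where
  Q : Type
  fintypeQ : Fintype Q
  T : DFA A Q
  minimal_reachable : ∀ q : Q, ∃ w : List A, T.evalFrom T.start w = q
  minimal_distinguishable :
    ∀ q q' : Q, (∀ w : List A, T.evalFrom q w ∈ T.accept ↔ T.evalFrom q' w ∈ T.accept) → q = q'
  R : A → List A → Prop
  R_ne : ∀ a v, R a v → v ≠ []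
  R_regular : ∀ a, Language.IsRegular {v : List A | R a v}

variable {A : Type}

/-- `a` is a function symbol (its replacement language is nonempty). -/
def CFGame.Fn (G : CFGame A) (a : A) : Prop := ∃ v, G.R a v

/-- One-pass strategies of Juliet (values at non-function symbols are irrelevant). -/
abbrev JStrat (A : Type) : Type := List (HSym A) → A → JMove

/-- Strategies of Romeo (values at non-function symbols are irrelevant). -/
abbrev RStrat (A : Type) : Type := List (HSym A) → A → List A

/-- Validity of a Romeo strategy: replacement words belong to the replacement language. -/
def CFGame.RValid (G : CFGame A) (τ : RStrat A) : Prop :=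
  ∀ (α : List (HSym A)) (a : A), G.Fn a → G.R a (τ α a)

/-- Configurations, instrumented for depth bookkeeping: a history string, the
remaining string where every symbol is annotated with its call-nesting level,
and the maximal nesting depth of the `Call` moves played so far. -/
abbrev Config (A : Type) : Type := List (HSym A) × List (A × ℕ) × ℕ

/-- One step of a play: Juliet reads or calls the current symbol according to `σ`
(a call is only possible at a function symbol); a call is answered by `τ`. -/
noncomputable def CFGame.step (G : CFGame A) (σ : JStrat A) (τ : RStrat A) :
    Config A → Config A :=
  fun c =>
    match c with
    | (α, [], d) => (α, [], d)
    | (α, (a, k) :: v, d) =>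
      letI := Classical.propDecidable (G.Fn a ∧ σ α a = JMove.call)
      if G.Fn a ∧ σ α a = JMove.call then
        (α ++ [Sum.inr a], (τ α a).map (fun b => (b, k + 1)) ++ v, max d (k + 1))
      else (α ++ [Sum.inl a], v, d)

/-- The play of `σ` against `τ` on input word `w`, as the sequence of its
configurations (the configuration stays fixed once the remaining string is empty). -/
noncomputable def CFGame.play (G : CFGame A) (σ : JStrat A) (τ : RStrat A)
    (w : List A) (n : ℕ) : Config A :=
  (G.step σ τ)^[n] ([], w.map (fun a => (a, 0)), 0)

/-- `σ` wins on `w`: against every (valid) Romeo strategy, the play on `w` is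
finite and its final string belongs to the target language. -/
def CFGame.WinsOn (G : CFGame A) (σ : JStrat A) (w : List A) : Prop :=
  ∀ τ : RStrat A, G.RValid τ →
    ∃ n : ℕ, (G.play σ τ w n).2.1 = [] ∧
      G.T.evalFrom G.T.start (flat (G.play σ τ w n).1) ∈ G.T.accept

/-- The winning set `W(σ)`. -/
def CFGame.W (G : CFGame A) (σ : JStrat A) : Set (List A) := {w | G.WinsOn σ w}

/-- `σ` is terminating: every play of `σ` is finite. -/
def CFGame.Terminating (G : CFGame A) (σ : JStrat A) : Prop :=
  ∀ τ : RStrat A, G.RValid τ → ∀ w : List A, ∃ n : ℕ, (G.play σ τ w n).2.1 = []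

/-- `σ` is dominant: it dominates every one-pass strategy. -/
def CFGame.Dominant (G : CFGame A) (σ : JStrat A) : Prop :=
  ∀ σ' : JStrat A, G.W σ' ⊆ G.W σ

/-- `σ` is undominated: no one-pass strategy strictly dominates it. -/
def CFGame.Undominated (G : CFGame A) (σ : JStrat A) : Prop :=
  ¬ ∃ σ' : JStrat A, G.W σ ⊂ G.W σ'

/-- `σ` is forgetful: its decisions only depend on `♮α` and the current symbol. -/
def CFGame.Forgetful (G : CFGame A) (σ : JStrat A) : Prop :=
  ∀ (α β : List (HSym A)) (a : A), G.Fn a → flat α = flat β → σ α a = σ β a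

/-- `σ` is regular: the language `{αa : σ(α,a) = Call}` over Σ̂ is regular. -/
def CFGame.RegularStrat (G : CFGame A) (σ : JStrat A) : Prop :=
  Language.IsRegular
    {x : List (HSym A) | ∃ (α : List (HSym A)) (a : A),
      G.Fn a ∧ σ α a = JMove.call ∧ x = α ++ [Sum.inl a]}

/-- One step of a strategy automaton of a strongly regular strategy, on the state
set `Q ∪ {Call}` (`none` is the absorbing state `Call`). -/
def optStep {Q : Type} (δA : Q → A → Option Q) (o : Option Q) (a : A) : Option Q :=
  o.bind (fun q => δA q a)

/-- `σ` is strongly regular: given by an automaton obtained from `T` by rerouting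
some transitions to a new accepting state `Call`; Juliet plays `Call` on `(α,a)`
iff the automaton maps `♮α·a` to `Call`. -/
def CFGame.StronglyRegular (G : CFGame A) (σ : JStrat A) : Prop :=
  ∃ δA : G.Q → A → Option G.Q,
    (∀ q a, δA q a = some (G.T.step q a) ∨ δA q a = none) ∧
    ∀ (α : List (HSym A)) (a : A), G.Fn a →
      (σ α a = JMove.call ↔
        List.foldl (optStep δA) (some G.T.start) (flat α ++ [a]) = none)

/-- Shortlex (strict) order on words. -/
def shortLex [LinearOrder A] (v w : List A) : Prop :=
  v.length < w.length ∨ (v.length = w.length ∧ List.Lex (· < ·) v w)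

/-- `V <_sl W` for sets of words: the shortlex-least word of the symmetric
difference belongs to `W`. -/
def slLT [LinearOrder A] (V W : Set (List A)) : Prop :=
  ∃ w : List A, w ∈ W ∧ w ∉ V ∧ ∀ v : List A, shortLex v w → (v ∈ V ↔ v ∈ W)

/-- `V ≤_sl W` for sets of words. -/
def slLE [LinearOrder A] (V W : Set (List A)) : Prop := V = W ∨ slLT V W

/-- `σ` is weakly dominant: `W(σ') ≤_sl W(σ)` for every one-pass strategy `σ'`. -/
def CFGame.WeaklyDominant [LinearOrder A] (G : CFGame A) (σ : JStrat A) : Prop :=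
  ∀ σ' : JStrat A, slLE (G.W σ') (G.W σ)

/-- The bounded depth property. -/
def CFGame.BoundedDepthProperty (G : CFGame A) : Prop :=
  ∃ B : ℕ → ℕ, ∀ σ : JStrat A, ∀ k : ℕ, ∃ σk : JStrat A,
    ∀ w ∈ G.W σ, w.length ≤ k →
      G.WinsOn σk w ∧
      ∀ τ : RStrat A, G.RValid τ → ∀ n : ℕ, (G.play σk τ w n).2.2 ≤ B w.length

/-- Prefix-freeness of all replacement languages. -/
def CFGame.PrefixFree (G : CFGame A) : Prop :=
  ∀ (a : A) (u v : List A), G.R a u → G.R a v → u <+: v → u = v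

/-- Non-recursiveness: no function symbol can be derived from itself. -/
def CFGame.NonRecursive (G : CFGame A) : Prop :=
  ¬ ∃ (n : ℕ) (f : ℕ → A), 1 ≤ n ∧ f 0 = f n ∧ (∀ i ≤ n, G.Fn (f i)) ∧
    ∀ k < n, ∃ v : List A, G.R (f k) v ∧ f (k + 1) ∈ v

/-- `σ` is almost undominated: only finitely many words are lost by `σ` but won
by some strategy dominating `σ`. -/
def CFGame.AlmostUndominated (G : CFGame A) (σ : JStrat A) : Prop :=
  Set.Finite {w : List A | ¬ G.WinsOn σ w ∧
    ∃ σ' : JStrat A, G.W σ ⊆ G.W σ' ∧ G.WinsOn σ' w}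

/-- Convergence of a sequence of one-pass strategies. -/
def Converges (G : CFGame A) (σs : ℕ → JStrat A) (σ : JStrat A) : Prop :=
  ∀ n : ℕ, ∃ k0 : ℕ, ∀ k ≥ k0, ∀ α : List (HSym A), α.length ≤ n →
    ∀ a : A, G.Fn a → σ α a = σs k α a

/-- The one-pass strategy defined by a DFA `M` over Σ̂ (a strategy automaton):
play `Call` on `(α,a)` iff `M` accepts `α·a`. -/
noncomputable def autoStrat {S : Type} (M : DFA (HSym A) S) : JStrat A :=
  fun α a =>
    letI := Classical.propDecidable (M.eval (α ++ [Sum.inl a]) ∈ M.accept)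
    if M.eval (α ++ [Sum.inl a]) ∈ M.accept then JMove.call else JMove.read

/-- `States(q; w, σ)`: the `T`-states `δ*(q, ♮α)` over final history strings `α`
of plays of `σ` on `w`. -/
def CFGame.StatesOf (G : CFGame A) (σ : JStrat A) (q : G.Q) (w : List A) : Set G.Q :=
  {q' | ∃ τ : RStrat A, G.RValid τ ∧ ∃ n : ℕ,
    (G.play σ τ w n).2.1 = [] ∧ G.T.evalFrom q (flat (G.play σ τ w n).1) = q'}

/-- `(p, a, S)` is an effect triple of `σ`. -/
def CFGame.IsEffectTriple (G : CFGame A) (σ : JStrat A) (t : G.Q × A × Set G.Q) : Prop :=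
  G.StatesOf σ t.1 [t.2.1] ⊆ t.2.2

/-- An effect triple is trivial if `δ(p,a) ∈ S`. -/
def CFGame.TrivialTriple (G : CFGame A) (t : G.Q × A × Set G.Q) : Prop :=
  G.T.step t.1 t.2.1 ∈ t.2.2

/-- The substrategy `σ^α`. -/
def subStrat (σ : JStrat A) (α : List (HSym A)) : JStrat A :=
  fun β a => σ (α ++ β) a

/-- The effect set `E(σ)`: all effect triples of all substrategies of `σ`. -/
def CFGame.EffectSet (G : CFGame A) (σ : JStrat A) : Set (G.Q × A × Set G.Q) :=
  {t | ∃ α : List (HSym A), G.IsEffectTriple (subStrat σ α) t}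

/-- The transition relation of the NFA `N_E` associated with a set `E` of effect
triples (state set `P(Q)`, initial state `{s}`, accepting states the subsets of `F`). -/
def CFGame.NEStep (G : CFGame A) (E : Set (G.Q × A × Set G.Q))
    (S : Set G.Q) (a : A) (S' : Set G.Q) : Prop :=
  ∀ p ∈ S, ∃ S'' : Set G.Q, S'' ⊆ S' ∧ (p, a, S'') ∈ E

/-- A strategy for the online word problem `OnlineNFA(N_E)`. -/
def CFGame.NEOnlineStrat (G : CFGame A) (E : Set (G.Q × A × Set G.Q))
    (ρ : List A → Set G.Q) : Prop :=
  ρ [] = {G.T.start} ∧ ∀ (w : List A) (a : A), G.NEStep E (ρ w) a (ρ (w ++ [a]))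

/-- The winning set of a strategy for `OnlineNFA(N_E)`. -/
def CFGame.NEWins (G : CFGame A) (ρ : List A → Set G.Q) : Set (List A) :=
  {w | ρ w ⊆ G.T.accept}

/-- A strategy automaton `M` is `(p,a,St)`-inducing. -/
def CFGame.Inducing (G : CFGame A) {S : Type} (M : DFA (HSym A) S)
    (p : G.Q) (a : A) (St : Set G.Q) : Prop :=
  G.Terminating (autoStrat M) ∧ G.Fn a ∧
  (∀ u : List A, G.R a u → G.StatesOf (autoStrat M) p u ⊆ St) ∧
  ∃ QA : G.Q → Set S,
    (∀ q ∈ St, ∀ q' ∈ St, q ≠ q' → Disjoint (QA q) (QA q')) ∧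
    ∀ u : List A, G.R a u → ∀ τ : RStrat A, G.RValid τ → ∀ n : ℕ,
      (G.play (autoStrat M) τ u n).2.1 = [] →
      ((∀ q ∈ St,
          (M.eval (G.play (autoStrat M) τ u n).1 ∈ QA q ↔
            G.T.evalFrom p (flat (G.play (autoStrat M) τ u n).1) = q)) ∧
        ∀ β : List (HSym A), β <+: (G.play (autoStrat M) τ u n).1 →
          β ≠ (G.play (autoStrat M) τ u n).1 → ∀ r ∈ St, M.eval β ∉ QA r)


set_option linter.unusedSectionVars false

section WeakDomAux
variable [LinearOrder A]

lemma lex_eq_lt (v w : List A) : List.Lex (· < ·) v w ↔ v < w := Iff.rfl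

lemma shortLex_irrefl (w : List A) : ¬ shortLex w w := by
  rintro (h | ⟨-, h⟩)
  · exact lt_irrefl _ h
  · exact lt_irrefl w ((lex_eq_lt w w).1 h)

lemma shortLex_trans {u v w : List A} (h1 : shortLex u v) (h2 : shortLex v w) :
    shortLex u w := by
  rcases h1 with h1 | ⟨e1, l1⟩ <;> rcases h2 with h2 | ⟨e2, l2⟩
  · exact Or.inl (lt_trans h1 h2)
  · exact Or.inl (e2 ▸ h1)
  · exact Or.inl (e1 ▸ h2)
  · exact Or.inr ⟨e1.trans e2, (lex_eq_lt u w).2 (lt_trans ((lex_eq_lt u v).1 l1) ((lex_eq_lt v w).1 l2))⟩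

lemma shortLex_trichot {v w : List A} (h : v ≠ w) : shortLex v w ∨ shortLex w v := by
  rcases lt_trichotomy v.length w.length with hl | hl | hl
  · exact Or.inl (Or.inl hl)
  · rcases lt_trichotomy v w with hv | hv | hv
    · exact Or.inl (Or.inr ⟨hl, (lex_eq_lt v w).2 hv⟩)
    · exact absurd hv h
    · exact Or.inr (Or.inr ⟨hl.symm, (lex_eq_lt w v).2 hv⟩)
  · exact Or.inr (Or.inl hl)

lemma shortLex_finite_preds [Fintype A] (w : List A) : {v : List A | shortLex v w}.Finite := by
  apply (List.finite_length_le A w.length).subset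
  rintro v (h | ⟨h, -⟩)
  · exact le_of_lt h
  · exact le_of_eq h

lemma wf_of_finite_preds {α : Type} {r : α → α → Prop} (ht : Transitive r)
    (hi : Irreflexive r) (hf : ∀ a, {b | r b a}.Finite) : WellFounded r := by
  classical
  constructor
  intro a
  have key : ∀ n (a : α), (hf a).toFinset.card ≤ n → Acc r a := by
    intro n
    induction n with
    | zero =>
      intro a ha
      constructor
      intro b hb
      exfalso
      have h0 : (hf a).toFinset = ∅ := Finset.card_eq_zero.1 (Nat.le_zero.1 ha)
      have : b ∈ (hf a).toFinset := (hf a).mem_toFinset.2 hb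
      rw [h0] at this
      exact Finset.notMem_empty b this
    | succ n ih =>
      intro a ha
      constructor
      intro b hb
      apply ih
      have hsub : (hf b).toFinset ⊆ (hf a).toFinset.erase b := by
        intro x hx
        rw [Set.Finite.mem_toFinset] at hx
        rw [Finset.mem_erase, Set.Finite.mem_toFinset]
        exact ⟨fun e => hi b (e ▸ hx), ht hx hb⟩
      calc (hf b).toFinset.card ≤ ((hf a).toFinset.erase b).card := Finset.card_le_card hsub
        _ ≤ (hf a).toFinset.card - 1 := by
            rw [Finset.card_erase_of_mem ((hf a).mem_toFinset.2 hb)]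
        _ ≤ n := by omega
  exact key _ a le_rfl

lemma shortLex_wf [Fintype A] : WellFounded (shortLex (A := A)) :=
  wf_of_finite_preds (fun _ _ _ => shortLex_trans) shortLex_irrefl shortLex_finite_preds

/-- The shortlex-least element of the symmetric difference. -/
lemma exists_least_diff [Fintype A] {V W : Set (List A)} (h : V ≠ W) :
    ∃ w : List A, ¬(w ∈ V ↔ w ∈ W) ∧ ∀ v, shortLex v w → (v ∈ V ↔ v ∈ W) := by
  have hne : {w : List A | ¬(w ∈ V ↔ w ∈ W)}.Nonempty := by
    by_contra hc
    apply h
    ext x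
    have := Set.not_nonempty_iff_eq_empty.1 hc
    by_contra hx
    exact absurd (Set.eq_empty_iff_forall_notMem.1 this x) (by simp [hx])
  obtain ⟨m, hm, hmin⟩ := shortLex_wf.has_min _ hne
  refine ⟨m, hm, fun v hv => ?_⟩
  by_contra hc
  exact hmin v hc hv

lemma slLE_total [Fintype A] (V W : Set (List A)) : slLE V W ∨ slLE W V := by
  by_cases h : V = W
  · exact Or.inl (Or.inl h)
  · obtain ⟨w, hw, hlt⟩ := exists_least_diff h
    by_cases hwW : w ∈ W
    · exact Or.inl (Or.inr ⟨w, hwW, fun hwV => hw ⟨fun _ => hwW, fun _ => hwV⟩, hlt⟩)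
    · have hwV : w ∈ V := by
        by_contra hwV
        exact hw ⟨fun h' => absurd h' hwV, fun h' => absurd h' hwW⟩
      exact Or.inr (Or.inr ⟨w, hwV, hwW, fun v hv => (hlt v hv).symm⟩)

lemma slLT_trans {V W X : Set (List A)} (h1 : slLT V W) (h2 : slLT W X) : slLT V X := by
  obtain ⟨w1, hw1X, hw1V, ha1⟩ := h1
  obtain ⟨w2, hw2X, hw2V, ha2⟩ := h2
  by_cases he : w1 = w2
  · subst he; exact absurd hw1X hw2V
  rcases shortLex_trichot he with hlt | hlt
  · refine ⟨w1, (ha2 w1 hlt).1 hw1X, hw1V, fun v hv => ?_⟩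
    exact (ha1 v hv).trans (ha2 v (shortLex_trans hv hlt))
  · refine ⟨w2, hw2X, fun hv => hw2V ((ha1 w2 hlt).1 hv), fun v hv => ?_⟩
    exact (ha1 v (shortLex_trans hv hlt)).trans (ha2 v hv)

lemma slLE_trans {V W X : Set (List A)} (h1 : slLE V W) (h2 : slLE W X) : slLE V X := by
  rcases h1 with rfl | h1
  · exact h2
  rcases h2 with rfl | h2
  · exact Or.inr h1
  · exact Or.inr (slLT_trans h1 h2)

/-- maximum of a nonempty finite set w.r.t. a total transitive relation -/
lemma exists_rel_max {β γ : Type} {r : γ → γ → Prop}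
    (htot : ∀ x y, r x y ∨ r y x) (htr : ∀ {x y z}, r x y → r y z → r x z)
    (f : β → γ) (s : Finset β) (hs : s.Nonempty) :
    ∃ m ∈ s, ∀ x ∈ s, r (f x) (f m) := by
  classical
  induction s using Finset.induction_on with
  | empty => exact absurd hs (by simp)
  | @insert a t ha ih =>
    by_cases ht : t.Nonempty
    · obtain ⟨m, hm, hmax⟩ := ih ht
      rcases htot (f a) (f m) with h | h
      · refine ⟨m, Finset.mem_insert_of_mem hm, fun x hx => ?_⟩
        rcases Finset.mem_insert.1 hx with rfl | hx
        · exact h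
        · exact hmax x hx
      · refine ⟨a, Finset.mem_insert_self a t, fun x hx => ?_⟩
        rcases Finset.mem_insert.1 hx with rfl | hx
        · rcases htot (f x) (f x) with h' | h' <;> exact h'
        · exact htr (hmax x hx) h
    · refine ⟨a, Finset.mem_insert_self a t, fun x hx => ?_⟩
      rcases Finset.mem_insert.1 hx with rfl | hx
      · rcases htot (f x) (f x) with h' | h' <;> exact h'
      · exact absurd ⟨x, hx⟩ ht

section Main

variable [Fintype A] {Q : Type} [Fintype Q] (δ : Q → A → Q → Prop) (F : Set Q)

/-- strategies from state `q` -/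
def IsStrat (q : Q) (ρ : List A → Q) : Prop :=
  ρ [] = q ∧ ∀ (w : List A) (a : A), δ (ρ w) a (ρ (w ++ [a]))

/-- The optimal winning set from state `q`, by well-founded recursion on shortlex. -/
def VOpt (q : Q) : List A → Prop :=
  shortLex_wf.fix (fun w ih =>
    ∃ ρ : List A → Q, IsStrat δ q ρ ∧ (∀ v, ∀ h : shortLex v w, (ρ v ∈ F ↔ ih v h)) ∧ ρ w ∈ F)

lemma VOpt_eq (q : Q) (w : List A) :
    VOpt δ F q w ↔
      ∃ ρ : List A → Q, IsStrat δ q ρ ∧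
        (∀ v, shortLex v w → (ρ v ∈ F ↔ VOpt δ F q v)) ∧ ρ w ∈ F := by
  unfold VOpt
  rw [WellFounded.fix_eq]

/-- L3: every strategy from `q` is shortlex-dominated by `VOpt q`. -/
lemma strat_le_VOpt {q : Q} {ρ : List A → Q} (hρ : IsStrat δ q ρ) :
    slLE {w | ρ w ∈ F} {w | VOpt δ F q w} := by
  by_cases h : {w : List A | ρ w ∈ F} = {w | VOpt δ F q w}
  · exact Or.inl h
  obtain ⟨m, hm, hagree⟩ := exists_least_diff h
  right
  have hmV : VOpt δ F q m → ρ m ∉ F := fun h1 h2 => hm ⟨fun _ => h1, fun _ => h2⟩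
  have : ¬ (ρ m ∈ F ∧ ¬ VOpt δ F q m) := by
    rintro ⟨h1, h2⟩
    exact h2 ((VOpt_eq δ F q m).2 ⟨ρ, hρ, fun v hv => hagree v hv, h1⟩)
  have hV : VOpt δ F q m := by
    by_contra h2
    by_cases h1 : ρ m ∈ F
    · exact this ⟨h1, h2⟩
    · exact hm ⟨fun h' => absurd h' h1, fun h' => absurd h' h2⟩
  exact ⟨m, hV, hmV hV, hagree⟩

/-- The greedy positional choice. -/
lemma exists_dmax (htotal : ∀ (q : Q) (a : A), ∃ p : Q, δ q a p) : ∃ d : Q → A → Q, ∀ (q : Q) (a : A), δ q a (d q a) ∧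
    ∀ p : Q, δ q a p → slLE {w | VOpt δ F p w} {w | VOpt δ F (d q a) w} := by
  classical
  have key : ∀ (q : Q) (a : A), ∃ m : Q, δ q a m ∧
      ∀ p : Q, δ q a p → slLE {w | VOpt δ F p w} {w | VOpt δ F m w} := by
    intro q a
    obtain ⟨p0, hp0⟩ := htotal q a
    obtain ⟨m, hm, hmax⟩ := exists_rel_max (r := slLE (A := A))
      (fun x y => slLE_total x y) (fun h1 h2 => slLE_trans h1 h2)
      (fun p => {w | VOpt δ F p w}) (Finset.univ.filter (fun p => δ q a p))
      ⟨p0, by simpa using hp0⟩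
    refine ⟨m, by simpa using hm, fun p hp => hmax p (by simpa using hp)⟩
  exact ⟨fun q a => (key q a).choose, fun q a => (key q a).choose_spec⟩

lemma not_shortLex_nil (v : List A) : ¬ shortLex v ([] : List A) := by
  rintro (h | ⟨h1, h2⟩)
  · simp at h
  · cases h2

lemma shortLex_cons {a : A} {v u : List A} (h : shortLex v u) :
    shortLex (a :: v) (a :: u) := by
  rcases h with h | ⟨e, l⟩
  · exact Or.inl (by simpa using h)
  · exact Or.inr ⟨by simp [e], List.Lex.cons l⟩

lemma foldl_isStrat (d : Q → A → Q) (hd : ∀ (q : Q) (a : A), δ q a (d q a)) (q : Q) :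
    IsStrat δ q (fun w => List.foldl d q w) := by
  refine ⟨rfl, fun w a => ?_⟩
  simp only [List.foldl_append, List.foldl_cons, List.foldl_nil]
  exact hd _ a

lemma VOpt_foldl (d : Q → A → Q)
    (hd : ∀ (q : Q) (a : A), δ q a (d q a) ∧
      ∀ p : Q, δ q a p → slLE {w | VOpt δ F p w} {w | VOpt δ F (d q a) w})
    (w : List A) : ∀ q : Q, VOpt δ F q w ↔ List.foldl d q w ∈ F := by
  have hd1 : ∀ (q : Q) (a : A), δ q a (d q a) := fun q a => (hd q a).1
  induction w using WellFounded.induction (hwf := shortLex_wf (A := A)) with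
  | _ w IH => ?_
  intro q
  match w with
  | [] =>
    rw [VOpt_eq]
    constructor
    · rintro ⟨ρ, hρ, -, hwin⟩
      rw [hρ.1] at hwin
      exact hwin
    · intro hq
      exact ⟨fun w => List.foldl d q w, foldl_isStrat δ d hd1 q,
        fun v hv => absurd hv (not_shortLex_nil v), hq⟩
  | a :: u =>
    have hu_lt : shortLex u (a :: u) := Or.inl (by simp)
    show VOpt δ F q (a :: u) ↔ List.foldl d (d q a) u ∈ F
    rw [← IH u hu_lt (d q a)]
    constructor
    · intro hq
      rw [VOpt_eq] at hq
      obtain ⟨ρ, hρ, hagree, hwin⟩ := hq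
      have hδp : δ q a (ρ [a]) := by
        have h := hρ.2 [] a
        rwa [hρ.1] at h
      have hstrat_a : IsStrat δ (ρ [a]) (fun v => ρ (a :: v)) := by
        refine ⟨rfl, fun w b => ?_⟩
        have h := hρ.2 (a :: w) b
        simpa using h
      have hA : ∀ v, shortLex v u → (ρ (a :: v) ∈ F ↔ VOpt δ F (d q a) v) := by
        intro v hv
        have h1 : shortLex (a :: v) (a :: u) := shortLex_cons hv
        have h2 := hagree (a :: v) h1
        have h3 := IH (a :: v) h1 q
        have h4 := IH v (shortLex_trans hv hu_lt) (d q a)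
        exact h2.trans (h3.trans h4.symm)
      have hle : slLE {w | ρ (a :: w) ∈ F} {w | VOpt δ F (d q a) w} :=
        slLE_trans (strat_le_VOpt δ F hstrat_a) ((hd q a).2 (ρ [a]) hδp)
      rcases hle with heq | ⟨w0, hw0V, hw0n, hagr0⟩
      · have hu : u ∈ {w : List A | ρ (a :: w) ∈ F} := hwin
        rw [heq] at hu
        exact hu
      · by_contra hnV
        have hne : u ≠ w0 := by
          rintro rfl
          exact hw0n hwin
        have hnlt : ¬ shortLex u w0 := fun h => hnV ((hagr0 u h).1 hwin)
        rcases shortLex_trichot hne with h | h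
        · exact hnlt h
        · exact hw0n ((hA w0 h).2 hw0V)
    · intro hu
      rw [VOpt_eq]
      refine ⟨fun w => List.foldl d q w, foldl_isStrat δ d hd1 q, ?_, ?_⟩
      · intro v hv
        exact (IH v hv q).symm
      · show List.foldl d (d q a) u ∈ F
        exact (IH u hu_lt (d q a)).1 hu



theorem statement8 {A Q : Type} [Fintype A] [LinearOrder A] [Fintype Q]
    (δ : Q → A → Q → Prop) (s : Q) (F : Set Q)
    (htotal : ∀ (q : Q) (a : A), ∃ p : Q, δ q a p) :
    ∃ d : Q → A → Q, (∀ (q : Q) (a : A), δ q a (d q a)) ∧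
      ∀ ρ : List A → Q, ρ [] = s → (∀ (w : List A) (a : A), δ (ρ w) a (ρ (w ++ [a]))) →
        slLE {w : List A | ρ w ∈ F} {w : List A | List.foldl d s w ∈ F} := by
  obtain ⟨d, hd⟩ := exists_dmax δ F htotal
  refine ⟨d, fun q a => (hd q a).1, fun ρ h1 h2 => ?_⟩
  have hle := strat_le_VOpt δ F (q := s) ⟨h1, h2⟩
  have heq : {w : List A | VOpt δ F s w} = {w : List A | List.foldl d s w ∈ F} :=
    Set.ext fun w => VOpt_foldl δ F d hd w s
  rwa [heq] at hle

end Main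
end WeakDomAux


end CFG
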